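/- arXiv:1205.5426 — 10 statements merged into one kernel-verified Lean document; each statement's English description precedes it below -/
import Mathlib

section
/- Let k be a separably closed field of characteristic different from 2, let n ≥ 1, and let A, B be symmetric n×n matrices over k with A invertible such that the characteristic polynomial of A⁻¹B is separable. Then there exist an invertible matrix P over k and pairwise distinct scalars λ₀, …, λ_{n−1} ∈ k such that Pᵀ·A·P is the identity matrix and Pᵀ·B·P is the diagonal matrix with entries λ₀, …, λ_{n−1}. -/
open Matrix Polynomial

/-! The `n` distinct eigenvalues `λᵢ` of `M = A⁻¹B` give an eigenbasis, i.e. an invertible `Q`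
with `MQ = Q diag λ`. Symmetry of `A` and `B` makes `M` self-adjoint for the form `A`
(`MᵀA = AM`), so `QᵀAQ` commutes with `diag λ` and is therefore diagonal, the `λᵢ` being
distinct. Rescaling the columns of `Q` by inverse square roots of its (nonzero) diagonal
entries, which exist because `k` is separably closed of characteristic `≠ 2`, turns `QᵀAQ`
into `1` and keeps `MP = P diag λ`, whence `PᵀBP = PᵀAMP = diag λ`. -/

namespace Matrix

variable {ι k : Type*} [Fintype ι] [DecidableEq ι]

section Field

variable [Field k]

lemma exists_injective_isRoot_charpoly {M : Matrix ι ι k} (hsplit : M.charpoly.Splits)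
    (hsep : M.charpoly.Separable) :
    ∃ lam : ι → k, Function.Injective lam ∧ ∀ i, M.charpoly.IsRoot (lam i) := by
  classical
  have hcard : Fintype.card ι = Fintype.card M.charpoly.roots.toFinset := by
    rw [Fintype.card_coe, Multiset.toFinset_card_of_nodup (nodup_roots hsep),
      splits_iff_card_roots.1 hsplit, charpoly_natDegree_eq_dim]
  let e := Fintype.equivOfCardEq hcard
  exact ⟨fun i => e i, Subtype.val_injective.comp e.injective,
    fun i => isRoot_of_mem_roots (Multiset.mem_toFinset.1 (e i).2)⟩

lemma exists_isUnit_mul_eq_mul_diagonal {M : Matrix ι ι k} (hsplit : M.charpoly.Splits)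
    (hsep : M.charpoly.Separable) :
    ∃ Q : Matrix ι ι k, IsUnit Q.det ∧
      ∃ lam : ι → k, Function.Injective lam ∧ M * Q = Q * diagonal lam := by
  obtain ⟨lam, hlam, hroot⟩ := exists_injective_isRoot_charpoly hsplit hsep
  have hev : ∀ i, Module.End.HasEigenvalue (toLin' M) (lam i) := fun i => by
    rw [Module.End.hasEigenvalue_iff_isRoot_charpoly, charpoly_toLin']
    exact hroot i
  choose v hv using fun i => (hev i).exists_hasEigenvector
  refine ⟨(of v)ᵀ, ?_, lam, hlam, ?_⟩
  · rw [← isUnit_iff_isUnit_det, ← linearIndependent_cols_iff_isUnit]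
    exact Module.End.eigenvectors_linearIndependent' _ lam hlam v hv
  · ext r i
    have h := congrFun (Module.End.mem_eigenspace_iff.1 (hv i).1) r
    simp only [toLin'_apply, Pi.smul_apply, smul_eq_mul] at h
    rw [mul_diagonal]
    simpa only [mul_apply, transpose_apply, of_apply, mul_comm, mulVec, dotProduct] using h

lemma exists_isUnit_det_diagonal_mul_mul_diagonal_eq_one [IsSepClosed k] [NeZero (2 : k)]
    {G : Matrix ι ι k} (hG : G.IsDiag) (hdet : IsUnit G.det) :
    ∃ s : ι → k, IsUnit (diagonal s).det ∧ diagonal s * G * diagonal s = 1 := by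
  choose z hz using fun i => IsSepClosed.exists_eq_mul_self (G i i)
  have hG0 : ∀ i, G i i ≠ 0 := by
    rw [← (isDiag_iff_diagonal_diag G).1 hG, det_diagonal, isUnit_iff_ne_zero,
      Finset.prod_ne_zero_iff] at hdet
    exact fun i => hdet i (Finset.mem_univ i)
  have hz0 : ∀ i, z i ≠ 0 := fun i h => hG0 i (by rw [hz i, h, zero_mul])
  refine ⟨fun i => (z i)⁻¹, ?_, ?_⟩
  · rw [det_diagonal, isUnit_iff_ne_zero, Finset.prod_ne_zero_iff]
    exact fun i _ => inv_ne_zero (hz0 i)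
  · rw [← (isDiag_iff_diagonal_diag G).1 hG, diagonal_mul_diagonal, diagonal_mul_diagonal,
      ← diagonal_one]
    congr 1
    funext i
    simp only [diag_apply, hz i]
    field_simp [hz0 i]

end Field

section CommRing

variable {R : Type*} [CommRing R]

lemma isDiag_of_commute_diagonal [NoZeroDivisors R] {G : Matrix ι ι R} {lam : ι → R}
    (hlam : Function.Injective lam) (h : Commute G (diagonal lam)) : G.IsDiag := by
  intro i j hij
  have hij' := congrFun (congrFun h.eq i) j
  rw [mul_diagonal, diagonal_mul] at hij'
  have : (lam j - lam i) * G i j = 0 := by linear_combination hij'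
  exact (mul_eq_zero.1 this).resolve_left (sub_ne_zero.2 fun h => hij (hlam h).symm)

lemma commute_transpose_mul_mul_diagonal {A M Q : Matrix ι ι R} {lam : ι → R}
    (hMA : Mᵀ * A = A * M) (hMQ : M * Q = Q * diagonal lam) :
    Commute (Qᵀ * A * Q) (diagonal lam) :=
  calc Qᵀ * A * Q * diagonal lam
      = Qᵀ * (A * M) * Q := by
        rw [Matrix.mul_assoc _ _ (diagonal lam), ← hMQ]; simp only [Matrix.mul_assoc]
    _ = (M * Q)ᵀ * A * Q := by rw [← hMA]; simp only [transpose_mul, Matrix.mul_assoc]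
    _ = diagonal lam * (Qᵀ * A * Q) := by
      rw [hMQ, transpose_mul, diagonal_transpose]; simp only [Matrix.mul_assoc]

end CommRing

end Matrix

theorem stmt_0_general (k : Type*) [Field k] [IsSepClosed k] (hchar : ringChar k ≠ 2)
    (n : ℕ) (A B : Matrix (Fin n) (Fin n) k)
    (hA : A.IsSymm) (hB : B.IsSymm) (hAinv : IsUnit A.det)
    (hsep : (Matrix.charpoly (A⁻¹ * B)).Separable) :
    ∃ P : Matrix (Fin n) (Fin n) k, IsUnit P.det ∧
      ∃ lam : Fin n → k, Function.Injective lam ∧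
        Pᵀ * A * P = 1 ∧ Pᵀ * B * P = Matrix.diagonal lam := by
  have : NeZero (2 : k) := ⟨Ring.two_ne_zero hchar⟩
  set M := A⁻¹ * B
  have hBM : B = A * M := (mul_nonsing_inv_cancel_left A B hAinv).symm
  have hMA : Mᵀ * A = A * M := by
    rw [transpose_mul, transpose_nonsing_inv, hA.eq, hB.eq,
      nonsing_inv_mul_cancel_right _ _ hAinv, hBM]
  obtain ⟨Q, hQ, lam, hlam, hMQ⟩ :=
    exists_isUnit_mul_eq_mul_diagonal (IsSepClosed.splits_of_separable _ hsep) hsep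
  obtain ⟨s, hs, hsG⟩ := exists_isUnit_det_diagonal_mul_mul_diagonal_eq_one
    (isDiag_of_commute_diagonal hlam (commute_transpose_mul_mul_diagonal hMA hMQ))
    (by simpa only [det_mul, det_transpose] using (hQ.mul hAinv).mul hQ)
  have hPA : (Q * diagonal s)ᵀ * A * (Q * diagonal s) = 1 := by
    rw [← hsG, transpose_mul, diagonal_transpose]; simp only [Matrix.mul_assoc]
  have hMP : M * (Q * diagonal s) = Q * diagonal s * diagonal lam := by
    rw [← Matrix.mul_assoc, hMQ, Matrix.mul_assoc, (commute_diagonal lam s).eq, Matrix.mul_assoc]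
  refine ⟨Q * diagonal s, by simpa only [det_mul] using hQ.mul hs, lam, hlam, hPA, ?_⟩
  calc (Q * diagonal s)ᵀ * B * (Q * diagonal s)
      = (Q * diagonal s)ᵀ * A * (M * (Q * diagonal s)) := by
        rw [hBM]; simp only [Matrix.mul_assoc]
    _ = diagonal lam := by rw [hMP, ← Matrix.mul_assoc, hPA, Matrix.one_mul]

/-- Let `k` be a separably closed field of characteristic different from 2,
`n ≥ 1`, and `A, B` symmetric `n × n` matrices over `k` with `A` invertible such that the
characteristic polynomial of `A⁻¹ * B` is separable. Then there is an invertible matrix `P`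
and pairwise distinct scalars `λ₀, …, λ_{n-1}` with `Pᵀ * A * P = 1` and
`Pᵀ * B * P = diagonal λ`. -/
theorem stmt_0 (k : Type*) [Field k] [IsSepClosed k] (hchar : ringChar k ≠ 2)
    (n : ℕ) (hn : 1 ≤ n) (A B : Matrix (Fin n) (Fin n) k)
    (hA : A.IsSymm) (hB : B.IsSymm) (hAinv : IsUnit A.det)
    (hsep : (Matrix.charpoly (A⁻¹ * B)).Separable) :
    ∃ P : Matrix (Fin n) (Fin n) k, IsUnit P.det ∧
      ∃ lam : Fin n → k, Function.Injective lam ∧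
        Pᵀ * A * P = 1 ∧ Pᵀ * B * P = Matrix.diagonal lam :=
  stmt_0_general k hchar n A B hA hB hAinv hsep
end

section
/- Let k be a field of characteristic different from 2, let A, B be symmetric n×n matrices over k, and let λ₀, …, λ_{n−1} ∈ k be pairwise distinct. If P and Q are invertible n×n matrices over k such that Pᵀ·A·P = Qᵀ·A·Q = 1ₙ and Pᵀ·B·P = Qᵀ·B·Q = diag(λ₀, …, λ_{n−1}), then Q = P·D for some diagonal matrix D all of whose diagonal entries are 1 or −1. -/
open Matrix

/-- If two invertible matrices `P, Q` simultaneously diagonalize the pair of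
symmetric matrices `(A, B)` to `(1, diag λ)` with the `λᵢ` pairwise distinct, then `Q = P * D`
for a diagonal matrix `D` with diagonal entries `±1`. -/
theorem stmt_1 (k : Type*) [Field k] (hchar : ringChar k ≠ 2)
    (n : ℕ) (A B : Matrix (Fin n) (Fin n) k) (hA : A.IsSymm) (hB : B.IsSymm)
    (lam : Fin n → k) (hlam : Function.Injective lam)
    (P Q : Matrix (Fin n) (Fin n) k) (hP : IsUnit P.det) (hQ : IsUnit Q.det)
    (hPA : Pᵀ * A * P = 1) (hQA : Qᵀ * A * Q = 1)
    (hPB : Pᵀ * B * P = Matrix.diagonal lam) (hQB : Qᵀ * B * Q = Matrix.diagonal lam) :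
    ∃ D : Fin n → k, (∀ i, D i = 1 ∨ D i = -1) ∧ Q = P * Matrix.diagonal D := by
  set R := P⁻¹ * Q with hRdef
  have hPinv : P * P⁻¹ = 1 := Matrix.mul_nonsing_inv _ hP
  have hPR : P * R = Q := by
    rw [hRdef, ← mul_assoc, hPinv, one_mul]
  -- R is orthogonal
  have hRtR : Rᵀ * R = 1 := by
    have : (P * R)ᵀ * A * (P * R) = 1 := by rw [hPR]; exact hQA
    rw [transpose_mul] at this
    calc Rᵀ * R = Rᵀ * (Pᵀ * A * P) * R := by rw [hPA, mul_one]
    _ = Rᵀ * Pᵀ * A * (P * R) := by simp only [mul_assoc]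
    _ = 1 := this
  have hRRt : R * Rᵀ = 1 := mul_eq_one_comm.mp hRtR
  -- R conjugates diag lam to itself
  have hRdiag : Rᵀ * Matrix.diagonal lam * R = Matrix.diagonal lam := by
    have : (P * R)ᵀ * B * (P * R) = Matrix.diagonal lam := by rw [hPR]; exact hQB
    rw [transpose_mul] at this
    calc Rᵀ * Matrix.diagonal lam * R = Rᵀ * (Pᵀ * B * P) * R := by rw [hPB]
    _ = Rᵀ * Pᵀ * B * (P * R) := by simp only [mul_assoc]
    _ = Matrix.diagonal lam := this
  have hcomm : Matrix.diagonal lam * R = R * Matrix.diagonal lam := by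
    calc Matrix.diagonal lam * R = R * (Rᵀ * Matrix.diagonal lam * R) := by
          rw [show R * (Rᵀ * Matrix.diagonal lam * R) = (R * Rᵀ) * Matrix.diagonal lam * R by simp only [mul_assoc],
            hRRt, one_mul]
    _ = R * Matrix.diagonal lam := by rw [hRdiag]
  -- R is diagonal
  have hRoff : ∀ i j, i ≠ j → R i j = 0 := by
    intro i j hij
    have h1 := congrFun (congrFun hcomm i) j
    rw [Matrix.diagonal_mul, Matrix.mul_diagonal] at h1
    have hne : lam i - lam j ≠ 0 := sub_ne_zero.mpr (fun h => hij (hlam h))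
    have : (lam i - lam j) * R i j = 0 := by ring_nf; linear_combination h1
    exact (mul_eq_zero.mp this).resolve_left hne
  have hReq : R = Matrix.diagonal (fun i => R i i) := by
    ext i j
    by_cases h : i = j
    · subst h; simp
    · rw [Matrix.diagonal_apply_ne _ h]; exact hRoff i j h
  refine ⟨fun i => R i i, ?_, by rw [← hReq, hPR]⟩
  intro i
  have h1 := congrFun (congrFun hRtR i) i
  rw [Matrix.mul_apply] at h1
  have hsum : ∑ j, Rᵀ i j * R j i = R i i * R i i := by
    rw [Fintype.sum_eq_single i (fun j hj => by
      rw [Matrix.transpose_apply, hRoff j i (fun h => hj h)]; ring)]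
    simp [Matrix.transpose_apply]
  rw [hsum] at h1
  simp only [Matrix.one_apply_eq] at h1
  rcases mul_self_eq_one_iff.mp h1 with h | h
  · exact Or.inl h
  · exact Or.inr h
end

section
/- Let k be a field and L a nonzero finite-dimensional commutative reduced k-algebra. Let V be an L-module that is faithful and satisfies dim_k V = dim_k L. Then V is a free L-module of rank one, i.e., V is isomorphic to L as an L-module. -/
/-- Let `L` be a nonzero finite-dimensional commutative reduced algebra over a
field `k`, and `V` a faithful `L`-module with `dim_k V = dim_k L`. Then `V` is a free
`L`-module of rank one, i.e. `V ≃ₗ[L] L`. -/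
theorem stmt_4 (k L V : Type*) [Field k] [CommRing L] [Algebra k L]
    [Nontrivial L] [IsReduced L] [Module.Finite k L]
    [AddCommGroup V] [Module k V] [Module L V] [IsScalarTower k L V]
    (hfaithful : ∀ ℓ : L, (∀ v : V, ℓ • v = 0) → ℓ = 0)
    (hdim : Module.finrank k V = Module.finrank k L) :
    Nonempty (V ≃ₗ[L] L) := by
  classical
  haveI : IsArtinianRing L := isArtinian_of_tower k inferInstance
  haveI : Finite (MaximalSpectrum L) := inferInstance
  cases nonempty_fintype (MaximalSpectrum L)
  let φ := IsArtinianRing.equivPi L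
  let e : MaximalSpectrum L → L := fun i => φ.symm (Pi.single i 1)
  have hφe : ∀ i, φ (e i) = Pi.single i 1 := fun i => φ.apply_symm_apply _
  -- orthogonality / idempotency
  have horth : ∀ i j, i ≠ j → e i * e j = 0 := by
    intro i j hij
    apply φ.injective
    rw [map_mul, hφe, hφe, map_zero]
    funext l
    by_cases hli : l = i
    · subst hli; simp [Pi.single_apply, hij]
    · simp [Pi.single_apply, hli]
  have hidem : ∀ i, e i * e i = e i := by
    intro i
    apply φ.injective
    rw [map_mul, hφe]
    funext l
    by_cases hli : l = i
    · subst hli; simp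
    · simp [Pi.single_apply, hli]
  -- pick vectors not killed by each idempotent
  have hex : ∀ i, ∃ wv : V, e i • wv ≠ 0 := by
    intro i
    by_contra h
    push_neg at h
    have hei : e i = 0 := hfaithful _ h
    haveI := i.isMaximal
    have h1 : (Pi.single i 1 : ∀ I : MaximalSpectrum L, L ⧸ I.asIdeal) = 0 := by
      rw [← hφe i, hei, map_zero]
    have := congrFun h1 i
    simp [Pi.single_apply] at this
  choose w hw using hex
  -- the cyclic vector
  have hann : ∀ ℓ : L, ℓ • (∑ i, e i • w i) = 0 → ℓ = 0 := by
    intro ℓ hℓ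
    apply φ.injective
    rw [map_zero]
    funext i
    show φ ℓ i = 0
    by_contra hc
    haveI := i.isMaximal
    letI : Field (L ⧸ i.1) := Ideal.Quotient.field i.asIdeal
    have hmdef : φ (φ.symm (Pi.single i (φ ℓ i)⁻¹)) = Pi.single i (φ ℓ i)⁻¹ :=
      φ.apply_symm_apply _
    have hmℓ : φ.symm (Pi.single i (φ ℓ i)⁻¹) * ℓ = e i := by
      apply φ.injective
      rw [map_mul, hmdef, hφe]
      funext j
      by_cases hji : j = i
      · subst hji
        rw [Pi.mul_apply, Pi.single_eq_same, Pi.single_eq_same]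
        exact inv_mul_cancel₀ hc
      · simp [Pi.single_apply, hji]
    have heiv : e i • (∑ j, e j • w j) = e i • w i := by
      rw [Finset.smul_sum, Finset.sum_eq_single i]
      · rw [smul_smul, hidem]
      · intro j _ hj
        rw [smul_smul, horth i j (Ne.symm hj), zero_smul]
      · intro h; exact absurd (Finset.mem_univ i) h
    have : e i • w i = 0 := by
      calc e i • w i = (φ.symm (Pi.single i (φ ℓ i)⁻¹) * ℓ) • (∑ j, e j • w j) := by
            rw [hmℓ, heiv]
        _ = φ.symm (Pi.single i (φ ℓ i)⁻¹) • (ℓ • (∑ j, e j • w j)) := by rw [mul_smul]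
        _ = 0 := by rw [hℓ, smul_zero]
    exact hw i this
  -- the map L → V, ℓ ↦ ℓ • v, is injective L-linear
  set f : L →ₗ[L] V := LinearMap.toSpanSingleton L V (∑ i, e i • w i) with hf
  have hinj : Function.Injective f := by
    rw [← LinearMap.ker_eq_bot, LinearMap.ker_eq_bot']
    intro ℓ hℓ
    exact hann ℓ hℓ
  -- dimension count
  haveI : FiniteDimensional k L := ‹Module.Finite k L›
  have hpos : 0 < Module.finrank k L := Module.finrank_pos
  haveI : FiniteDimensional k V := FiniteDimensional.of_finrank_pos (hdim ▸ hpos)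
  have hsurj : Function.Surjective f :=
    (LinearMap.injective_iff_surjective_of_finrank_eq_finrank
      (f := f.restrictScalars k) hdim.symm).mp hinj
  exact ⟨(LinearEquiv.ofBijective f ⟨hinj, hsurj⟩).symm⟩
end

section
/- Let B₀ be a balanced k-bilinear form on L that is nondegenerate. Then for every balanced k-bilinear form B on L there exists a unique α ∈ L such that B(x, y) = B₀(α·x, y) for all x, y ∈ L; in other words, the space of balanced bilinear forms on L is a free L-module of rank one generated by B₀. -/
/-- Let `L = k[t]/(f)` with `f` monic separable of degree `n ≥ 1`. If `B₀` is a
nondegenerate balanced `k`-bilinear form on `L`, then every balanced `k`-bilinear form `B` on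
`L` equals `B₀ (α * ·, ·)` for a unique `α ∈ L`; i.e. the space of balanced forms is a free
`L`-module of rank one generated by `B₀`. -/
theorem stmt_7 (k : Type*) [Field k] (f : Polynomial k) (hf : f.Monic)
    (hsep : f.Separable) (hn : 1 ≤ f.natDegree)
    (B₀ : AdjoinRoot f →ₗ[k] AdjoinRoot f →ₗ[k] k)
    (hbal₀ : ∀ a x y : AdjoinRoot f, B₀ (a * x) y = B₀ x (a * y))
    (hnd₀ : ∀ x : AdjoinRoot f, (∀ y : AdjoinRoot f, B₀ x y = 0) → x = 0)
    (B : AdjoinRoot f →ₗ[k] AdjoinRoot f →ₗ[k] k)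
    (hbal : ∀ a x y : AdjoinRoot f, B (a * x) y = B x (a * y)) :
    ∃! α : AdjoinRoot f, ∀ x y : AdjoinRoot f, B x y = B₀ (α * x) y := by
  haveI : FiniteDimensional k (AdjoinRoot f) :=
    (AdjoinRoot.powerBasis hf.ne_zero).finite
  have hinj : Function.Injective B₀ := by
    intro x y hxy
    have h : x - y = 0 := hnd₀ _ (fun z => by simp [map_sub, hxy])
    exact sub_eq_zero.mp h
  have hsurj : Function.Surjective B₀ := by
    exact (LinearMap.injective_iff_surjective_of_finrank_eq_finrank
      Subspace.dual_finrank_eq.symm).mp hinj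
  obtain ⟨α, hα⟩ := hsurj (B 1)
  refine ⟨α, fun x y => ?_, fun β hβ => ?_⟩
  · have h1 : B x y = B 1 (x * y) := by
      have := hbal x 1 y
      simpa using this
    have h2 : B₀ (α * x) y = B₀ α (x * y) := by
      have := hbal₀ x α y
      simpa [mul_comm] using this
    rw [h1, h2, hα]
  · have h : ∀ y, B₀ (β - α) y = 0 := by
      intro y
      have hβ1 := hβ 1 y
      have hα1 : B 1 y = B₀ (α * 1) y := by simp only [mul_one]; rw [hα]
      simp only [mul_one] at hβ1 hα1
      simp [map_sub, ← hβ1, hα1]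
    exact sub_eq_zero.mp (hnd₀ _ h)
end

section
/- Let θ' ∈ L be another generator of L as a k-algebra, and let P_{θ'} ∈ k[t] be the characteristic polynomial of the k-linear endomorphism of L given by multiplication by θ' (so P_θ = f is that of θ). Then f'(θ) and P'_{θ'}(θ') are units of L, the powers (1, θ', …, θ'^{n−1}) form a k-basis of L, and, denoting by θ'^*_{n−1} the functional picking out the coefficient of θ'^{n−1} in that basis, one has t_{θ'}(x, y) = t_θ( f'(θ)·P'_{θ'}(θ')^{−1}·x, y) for all x, y ∈ L, where t_{θ'}(x, y) := θ'^*_{n−1}(x·y). -/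
/-!
Let `q(X) = f(X) / (X - θ) = ∑ qᵢ Xⁱ` (Mathlib's `minpolyDiv`) and let `ct` be the
top-coefficient functional. The `qᵢ` form the basis dual to `1, θ, …, θ^(n-1)` for the
pairing `(x, y) ↦ ct (x y)`, so `Tr z = ∑ᵢ ct (qᵢ θⁱ z) = ct (q(θ) z) = ct (f'(θ) z)`
(Euler's formula). The minimal polynomial of the generator `θ'` is its characteristic
polynomial `P_{θ'}`, so the same formula for the power basis of `θ'` gives
`ct (f'(θ) z) = Tr z = ct' (P'_{θ'}(θ') z)`. Separability makes `f'(θ)` a unit, hence the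
trace form nondegenerate, and by the formula for `θ'` this nondegeneracy makes `P'_{θ'}(θ')`
a unit as well.
-/

section

open Polynomial Module

variable {k A : Type*} [Field k] [CommRing A] [Algebra k A]

def IsTopCoeff (ct : A →ₗ[k] k) (θ : A) (n : ℕ) : Prop :=
  ∀ i < n, ct (θ ^ i) = if i + 1 = n then 1 else 0

lemma isTopCoeff_of_pow {ct : A →ₗ[k] k} {θ : A} {n : ℕ} (h1 : ct (θ ^ (n - 1)) = 1)
    (h0 : ∀ i < n - 1, ct (θ ^ i) = 0) : IsTopCoeff ct θ n := by
  intro i hi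
  split_ifs with h
  · rwa [show i = n - 1 by omega]
  · exact h0 i (by omega)

lemma Polynomial.Separable.isUnit_aeval_derivative {R S : Type*} [CommRing R] [CommRing S]
    [Algebra R S] {f : R[X]} (hf : f.Separable) {x : S} (hx : aeval x f = 0) :
    IsUnit (aeval x (derivative f)) := by
  have := IsCoprime.map hf (aeval x).toRingHom
  rw [AlgHom.toRingHom_eq_coe, RingHom.coe_coe, hx] at this
  exact isCoprime_zero_left.mp this

lemma coeff_zero_minpolyDiv_mul {R S : Type*} [CommRing R] [CommRing S] [Algebra R S] (x : S) :
    (minpolyDiv R x).coeff 0 * x = -algebraMap R S ((minpoly R x).coeff 0) := by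
  have := congrArg (coeff · 0) (minpolyDiv_spec R x)
  simp only [mul_coeff_zero, coeff_sub, coeff_X_zero, coeff_C_zero, zero_sub, coeff_map] at this
  rw [← this]; ring

namespace PowerBasis

variable (pb : PowerBasis k A) {ct : A →ₗ[k] k}

lemma exists_isTopCoeff : ∃ ct : A →ₗ[k] k, IsTopCoeff ct pb.gen pb.dim := by
  rcases Nat.eq_zero_or_pos pb.dim with h | h
  · exact ⟨0, fun i hi => by omega⟩
  refine ⟨pb.basis.coord ⟨pb.dim - 1, by omega⟩, fun i hi => ?_⟩
  rw [← pb.basis_eq_pow ⟨i, hi⟩, Basis.coord_apply, Basis.repr_self, Finsupp.single_apply]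
  simp only [Fin.mk.injEq]
  exact if_congr (by omega) rfl rfl

lemma topCoeff_coeff_minpolyDiv (hct : IsTopCoeff ct pb.gen pb.dim) {i : ℕ} (hi : i < pb.dim) :
    ct ((minpolyDiv k pb.gen).coeff i) = if i = 0 then 1 else 0 := by
  have hdeg : (minpolyDiv k pb.gen).natDegree = pb.dim - 1 := by
    rw [natDegree_minpolyDiv, pb.natDegree_minpoly]
  have hmem := coeff_minpolyDiv_sub_pow_mem_span pb.isIntegral_gen
    (i := pb.dim - 1 - i) (by omega)
  rw [hdeg, show pb.dim - 1 - (pb.dim - 1 - i) = i by omega] at hmem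
  have hvanish : Submodule.span k ((pb.gen ^ ·) '' Set.Iio (pb.dim - 1 - i)) ≤
      LinearMap.ker ct := by
    rw [Submodule.span_le]
    rintro _ ⟨j, hj, rfl⟩
    rw [Set.mem_Iio] at hj
    rw [SetLike.mem_coe, LinearMap.mem_ker, hct j (by omega), if_neg (by omega)]
  have := hvanish hmem
  rw [LinearMap.mem_ker, map_sub, sub_eq_zero] at this
  rw [this, hct _ (by omega)]
  exact if_congr (by omega) rfl rfl

lemma topCoeff_pow_mul_coeff_minpolyDiv (hct : IsTopCoeff ct pb.gen pb.dim) {j : ℕ}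
    (hj : j < pb.dim) {i : ℕ} (hi : i < pb.dim) :
    ct (pb.gen ^ j * (minpolyDiv k pb.gen).coeff i) = if i = j then 1 else 0 := by
  induction j generalizing i with
  | zero => rw [pow_zero, one_mul, pb.topCoeff_coeff_minpolyDiv hct hi]
  | succ j ih =>
    have hj0 : ct (pb.gen ^ j) = 0 := by rw [hct j (by omega), if_neg (by omega)]
    cases i with
    | zero =>
      rw [pow_succ, mul_assoc, mul_comm pb.gen, coeff_zero_minpolyDiv_mul, mul_neg,
        ← Algebra.commutes, ← Algebra.smul_def, map_neg, map_smul, hj0]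
      simp
    | succ i =>
      rw [pow_succ, mul_assoc, mul_comm pb.gen,
        eq_sub_of_add_eq' (coeff_minpolyDiv k pb.gen i).symm, mul_sub,
        ← Algebra.commutes, ← Algebra.smul_def, map_sub, map_smul, hj0, smul_zero, sub_zero,
        ih (by omega) (by omega)]
      exact if_congr (by omega) rfl rfl

lemma basis_repr_eq_topCoeff (hct : IsTopCoeff ct pb.gen pb.dim) (w : A) (i : Fin pb.dim) :
    pb.basis.repr w i = ct ((minpolyDiv k pb.gen).coeff i * w) := by
  have hfun : (Finsupp.lapply i).comp (pb.basis.repr : A →ₗ[k] Fin pb.dim →₀ k) =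
      ct.comp (LinearMap.mulLeft k ((minpolyDiv k pb.gen).coeff i)) := by
    refine pb.basis.ext fun j => ?_
    rw [LinearMap.comp_apply, LinearMap.comp_apply, Finsupp.lapply_apply, LinearEquiv.coe_coe,
      pb.basis.repr_self, Finsupp.single_apply, LinearMap.mulLeft_apply, mul_comm, pb.basis_eq_pow,
      pb.topCoeff_pow_mul_coeff_minpolyDiv hct j.isLt i.isLt]
    exact if_congr (by rw [Fin.ext_iff, eq_comm]) rfl rfl
  exact LinearMap.congr_fun hfun w

lemma eq_zero_of_forall_topCoeff_mul_eq_zero (hct : IsTopCoeff ct pb.gen pb.dim) {z : A}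
    (hz : ∀ w, ct (z * w) = 0) : z = 0 := by
  refine pb.basis.ext_elem fun i => ?_
  rw [pb.basis_repr_eq_topCoeff hct, mul_comm, hz, map_zero, Finsupp.zero_apply]

lemma sum_coeff_minpolyDiv_mul_pow :
    ∑ i : Fin pb.dim, (minpolyDiv k pb.gen).coeff i * pb.gen ^ (i : ℕ) =
      aeval pb.gen (derivative (minpoly k pb.gen)) := by
  cases subsingleton_or_nontrivial A
  · exact Subsingleton.elim _ _
  have hdeg : (minpolyDiv k pb.gen).natDegree < pb.dim := by
    simpa using natDegree_minpolyDiv_lt pb.isIntegral_gen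
  rw [← eval_minpolyDiv_self, eval_eq_sum_range' hdeg, Fin.sum_univ_eq_sum_range
    (fun i => (minpolyDiv k pb.gen).coeff i * pb.gen ^ i)]

theorem trace_eq_topCoeff (hct : IsTopCoeff ct pb.gen pb.dim) (z : A) :
    Algebra.trace k A z = ct (aeval pb.gen (derivative (minpoly k pb.gen)) * z) := by
  classical
  rw [Algebra.trace_eq_matrix_trace pb.basis, Matrix.trace, ← pb.sum_coeff_minpolyDiv_mul_pow,
    Finset.sum_mul, map_sum]
  refine Finset.sum_congr rfl fun i _ => ?_
  rw [Matrix.diag_apply, Algebra.leftMulMatrix_eq_repr_mul, pb.basis_repr_eq_topCoeff hct,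
    pb.basis_eq_pow]
  ring_nf

theorem isUnit_aeval_derivative_minpoly_iff :
    IsUnit (aeval pb.gen (derivative (minpoly k pb.gen))) ↔
      (Algebra.traceForm k A).SeparatingLeft := by
  obtain ⟨ct, hct⟩ := pb.exists_isTopCoeff
  simp only [LinearMap.SeparatingLeft, Algebra.traceForm_apply, pb.trace_eq_topCoeff hct]
  constructor
  · intro hu z hz
    refine (hu.mul_right_eq_zero).mp (pb.eq_zero_of_forall_topCoeff_mul_eq_zero hct fun w => ?_)
    rw [mul_assoc, hz]
  · intro hnd
    have := pb.finite
    have := IsArtinianRing.of_finite k A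
    refine IsArtinianRing.isUnit_of_mem_nonZeroDivisors
      (mem_nonZeroDivisors_iff_left.mpr fun z hz => hnd z fun w => ?_)
    rw [← mul_assoc, hz, zero_mul, map_zero]

theorem charpoly_mulLeft_gen [Module.Finite k A] :
    LinearMap.charpoly (LinearMap.mulLeft k pb.gen) = minpoly k pb.gen := by
  rw [← LinearMap.charpoly_toMatrix _ pb.basis]
  exact charpoly_leftMulMatrix pb

end PowerBasis

end

theorem stmt_9_general (k : Type*) [Field k] (f : Polynomial k) (hf : f.Monic)
    (hsep : f.Separable)
    [Module.Finite k (AdjoinRoot f)]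
    (coeffTop : AdjoinRoot f →ₗ[k] k)
    (hct1 : coeffTop (AdjoinRoot.root f ^ (f.natDegree - 1)) = 1)
    (hct0 : ∀ i : ℕ, i < f.natDegree - 1 → coeffTop (AdjoinRoot.root f ^ i) = 0)
    (θ' : AdjoinRoot f) (hgen : Algebra.adjoin k {θ'} = ⊤)
    (P' : Polynomial k) (hP' : P' = LinearMap.charpoly (LinearMap.mulLeft k θ')) :
    IsUnit (Polynomial.aeval (AdjoinRoot.root f) (Polynomial.derivative f)) ∧
    IsUnit (Polynomial.aeval θ' (Polynomial.derivative P')) ∧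
    (LinearIndependent k (fun i : Fin f.natDegree => θ' ^ (i : ℕ)) ∧
      Submodule.span k (Set.range fun i : Fin f.natDegree => θ' ^ (i : ℕ)) = ⊤) ∧
    ∀ coeffTop' : AdjoinRoot f →ₗ[k] k,
      coeffTop' (θ' ^ (f.natDegree - 1)) = 1 →
      (∀ i : ℕ, i < f.natDegree - 1 → coeffTop' (θ' ^ i) = 0) →
      ∀ x y : AdjoinRoot f,
        coeffTop' (x * y) =
          coeffTop (Polynomial.aeval (AdjoinRoot.root f) (Polynomial.derivative f) *
            Ring.inverse (Polynomial.aeval θ' (Polynomial.derivative P')) * x * y) := by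
  let pb := AdjoinRoot.powerBasis' hf
  let pb' := PowerBasis.ofAdjoinEqTop (Algebra.IsIntegral.isIntegral θ') hgen
  have hf_min : minpoly k pb.gen = f := by
    simp [pb, AdjoinRoot.minpoly_root hf.ne_zero, hf.leadingCoeff]
  have hdim : pb'.dim = f.natDegree := pb'.finrank.symm.trans pb.finrank
  obtain rfl : P' = minpoly k θ' := hP'.trans pb'.charpoly_mulLeft_gen
  have hu : IsUnit (Polynomial.aeval (AdjoinRoot.root f) (Polynomial.derivative f)) :=
    hsep.isUnit_aeval_derivative (AdjoinRoot.aeval_eq f ▸ AdjoinRoot.mk_self)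
  set u := Polynomial.aeval θ' (Polynomial.derivative (minpoly k θ'))
  have hu' : IsUnit u :=
    pb'.isUnit_aeval_derivative_minpoly_iff.mpr
      (pb.isUnit_aeval_derivative_minpoly_iff.mp (by rwa [hf_min]))
  refine ⟨hu, hu', ?_, fun ct' h1' h0' x y => ?_⟩
  · rw [← hdim]
    exact pb'.coe_basis ▸ ⟨pb'.basis.linearIndependent, pb'.basis.span_eq⟩
  have hct : IsTopCoeff coeffTop pb.gen pb.dim := isTopCoeff_of_pow hct1 hct0
  have hct' : IsTopCoeff ct' pb'.gen pb'.dim := hdim ▸ isTopCoeff_of_pow h1' h0'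
  calc ct' (x * y) = ct' (u * (Ring.inverse u * x * y)) := by
        rw [mul_assoc, ← mul_assoc u, Ring.mul_inverse_cancel _ hu', one_mul]
    _ = Algebra.trace k _ (Ring.inverse u * x * y) := (pb'.trace_eq_topCoeff hct' _).symm
    _ = _ := by rw [pb.trace_eq_topCoeff hct, hf_min, mul_assoc, mul_assoc, mul_assoc]; rfl

/-- Let `L = k[t]/(f)` with `f` monic separable of degree `n ≥ 1` and `θ` the
image of `t`. Let `θ'` be another generator of `L` as a `k`-algebra and `P_{θ'}` the
characteristic polynomial of multiplication by `θ'` on `L`. Then `f'(θ)` and `P'_{θ'}(θ')` are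
units of `L`, the powers `1, θ', …, θ'^(n-1)` form a `k`-basis of `L`, and the corresponding
top-coefficient forms satisfy `t_{θ'}(x, y) = t_θ(f'(θ) · P'_{θ'}(θ')⁻¹ · x, y)`. -/
theorem stmt_9 (k : Type*) [Field k] (f : Polynomial k) (hf : f.Monic)
    (hsep : f.Separable) (hn : 1 ≤ f.natDegree)
    [Module.Finite k (AdjoinRoot f)]
    (coeffTop : AdjoinRoot f →ₗ[k] k)
    (hct1 : coeffTop (AdjoinRoot.root f ^ (f.natDegree - 1)) = 1)
    (hct0 : ∀ i : ℕ, i < f.natDegree - 1 → coeffTop (AdjoinRoot.root f ^ i) = 0)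
    (θ' : AdjoinRoot f) (hgen : Algebra.adjoin k {θ'} = ⊤)
    (P' : Polynomial k) (hP' : P' = LinearMap.charpoly (LinearMap.mulLeft k θ')) :
    IsUnit (Polynomial.aeval (AdjoinRoot.root f) (Polynomial.derivative f)) ∧
    IsUnit (Polynomial.aeval θ' (Polynomial.derivative P')) ∧
    (LinearIndependent k (fun i : Fin f.natDegree => θ' ^ (i : ℕ)) ∧
      Submodule.span k (Set.range fun i : Fin f.natDegree => θ' ^ (i : ℕ)) = ⊤) ∧
    ∀ coeffTop' : AdjoinRoot f →ₗ[k] k,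
      coeffTop' (θ' ^ (f.natDegree - 1)) = 1 →
      (∀ i : ℕ, i < f.natDegree - 1 → coeffTop' (θ' ^ i) = 0) →
      ∀ x y : AdjoinRoot f,
        coeffTop' (x * y) =
          coeffTop (Polynomial.aeval (AdjoinRoot.root f) (Polynomial.derivative f) *
            Ring.inverse (Polynomial.aeval θ' (Polynomial.derivative P')) * x * y) :=
  stmt_9_general k f hf hsep coeffTop hct1 hct0 θ' hgen P' hP'
end

section
/- Suppose n = 2m + 1 with m ≥ 1, and let M ⊆ L be the m-dimensional k-subspace spanned by 1, θ, …, θ^{m−1}. Then M is a common isotropic subspace for the whole pencil spanned by t_θ and θ·t_θ: for all a, b ∈ k and all u, v ∈ M one has θ*_{n−1}((a + b·θ)·u·v) = 0. -/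
/-- Let `L = k[t]/(f)` with `f` monic separable of degree `n = 2m + 1`,
`m ≥ 1`, and `θ` the image of `t`. The subspace `M` spanned by `1, θ, …, θ^(m-1)` is a common
isotropic subspace for the pencil spanned by `t_θ` and `θ·t_θ`:
`θ*_{n-1}((a + bθ) u v) = 0` for all `a, b ∈ k` and `u, v ∈ M`. -/
theorem stmt_12 (k : Type*) [Field k] (f : Polynomial k) (hf : f.Monic)
    (hsep : f.Separable) (m : ℕ) (hm : 1 ≤ m) (hdeg : f.natDegree = 2 * m + 1)
    (coeffTop : AdjoinRoot f →ₗ[k] k)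
    (hct1 : coeffTop (AdjoinRoot.root f ^ (f.natDegree - 1)) = 1)
    (hct0 : ∀ i : ℕ, i < f.natDegree - 1 → coeffTop (AdjoinRoot.root f ^ i) = 0)
    (M : Submodule k (AdjoinRoot f))
    (hM : M = Submodule.span k (Set.range fun i : Fin m => AdjoinRoot.root f ^ (i : ℕ))) :
    ∀ a b : k, ∀ u ∈ M, ∀ v ∈ M,
      coeffTop ((algebraMap k (AdjoinRoot f) a +
        algebraMap k (AdjoinRoot f) b * AdjoinRoot.root f) * u * v) = 0 := by
  subst hM
  intro a b u hu v hv
  set θ := AdjoinRoot.root f with hθ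
  set c : AdjoinRoot f := algebraMap k (AdjoinRoot f) a + algebraMap k (AdjoinRoot f) b * θ
    with hc
  have key : ∀ i j : ℕ, i < m → j < m → coeffTop (c * θ ^ i * θ ^ j) = 0 := by
    intro i j hi hj
    have h1 : c * θ ^ i * θ ^ j = a • θ ^ (i + j) + b • θ ^ (i + j + 1) := by
      rw [hc]
      simp only [Algebra.smul_def, pow_add, pow_succ]
      ring
    rw [h1, map_add, map_smul, map_smul,
      hct0 _ (by rw [hdeg]; omega), hct0 _ (by rw [hdeg]; omega),
      smul_zero, smul_zero, add_zero]
  induction hu using Submodule.span_induction with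
  | mem x hx =>
    induction hv using Submodule.span_induction with
    | mem y hy =>
      obtain ⟨i, rfl⟩ := hx
      obtain ⟨j, rfl⟩ := hy
      exact key i j i.2 j.2
    | zero => simp
    | add y z hy hz ihy ihz => rw [mul_add, map_add, ihy, ihz, add_zero]
    | smul r y hy ihy => rw [mul_smul_comm, map_smul, ihy, smul_zero]
  | zero => simp
  | add y z hy hz ihy ihz => rw [mul_add, add_mul, map_add, ihy, ihz, add_zero]
  | smul r y hy ihy => rw [mul_smul_comm, smul_mul_assoc, map_smul, ihy, smul_zero]
end

section
/- Let k have characteristic different from 2, let n = 2m + 1 with m ≥ 1, and let α ∈ L be such that the symmetric bilinear form w(x, y) := θ*_{n−1}(α·x·y) on L is nondegenerate. Assume there exists an m-dimensional k-subspace M of L such that θ*_{n−1}(α·u·v) = 0 and θ*_{n−1}(α·θ·u·v) = 0 for all u, v ∈ M (i.e., M is isotropic for both w and θ·w). Then there exist a ∈ k with a ≠ 0 and a unit ℓ ∈ L^× such that α·ℓ² = a; in particular α ∈ k^×·(L^×)². -/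
/-!
Since `M + θM` lies in the `w`-orthogonal of `M`, which has dimension `m + 1`, multiplication by
`θ` moves `M` by at most one dimension. Intersecting `M` with its preimages under `θ` therefore
loses at most one dimension per step, and after `m - 1` steps a nonzero `ℓ` is left with
`ℓ, θℓ, …, θ^{m-1}ℓ ∈ M`. Isotropy of `M` for `w` and `θ·w` then gives
`θ*_{n-1}(θ^d · αℓ²) = 0` for all `d < 2m = n - 1`. The elements with this property form the
orthogonal of `⟨1, θ, …, θ^{n-2}⟩` for the nondegenerate form `(x, y) ↦ θ*_{n-1}(xy)`, a line
containing `1`; so `αℓ² = a ∈ k`, and `a ≠ 0` because `w` is nondegenerate and `L` is reduced.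
-/

open Module Submodule LinearMap

section Finrank

variable {K V V₂ : Type*} [Field K] [AddCommGroup V] [Module K V] [FiniteDimensional K V]
  [AddCommGroup V₂] [Module K V₂]

theorem finrank_map_add_finrank_inf_ker (f : V →ₗ[K] V₂) (W : Submodule K V) :
    finrank K (W.map f) + finrank K ↥(W ⊓ ker f) = finrank K W := by
  rw [← range_domRestrict, ← finrank_range_add_finrank_ker (f.domRestrict W), ker_domRestrict,
    ← finrank_map_subtype_eq W, map_comap_subtype]

theorem finrank_add_finrank_le_finrank_inf_comap_add_finrank_sup_map (g : V →ₗ[K] V)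
    (N : Submodule K V) :
    finrank K N + finrank K N ≤ finrank K ↥(N ⊓ N.comap g) + finrank K ↥(N ⊔ N.map g) := by
  have hN := finrank_map_add_finrank_inf_ker (N.mkQ ∘ₗ g) N
  have hW := finrank_map_add_finrank_inf_ker N.mkQ (N ⊔ N.map g)
  rw [ker_comp, ker_mkQ] at hN
  rw [ker_mkQ, inf_of_le_right le_sup_left] at hW
  have hmap : (N.map (N.mkQ ∘ₗ g)) ≤ (N ⊔ N.map g).map N.mkQ := by
    rw [map_comp]
    exact map_mono le_sup_right
  have := finrank_mono hmap
  omega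

theorem exists_ne_zero_forall_pow_apply_mem [Nontrivial V] (g : V →ₗ[K] V) (N : Submodule K V)
    (hN : finrank K ↥(N ⊔ N.map g) ≤ finrank K N + 1) :
    ∃ x ≠ 0, ∀ j < finrank K N, (g ^ j) x ∈ N := by
  have chain : ∀ i, ∃ P : Submodule K V, finrank K N ≤ finrank K P + i ∧
      finrank K ↥(P ⊔ P.map g) ≤ finrank K P + 1 ∧ ∀ x ∈ P, ∀ j ≤ i, (g ^ j) x ∈ N := by
    intro i
    induction i with
    | zero => exact ⟨N, by omega, hN, fun x hx j hj => by simpa [Nat.le_zero.mp hj] using hx⟩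
    | succ i ih =>
      obtain ⟨P, hPdim, hPg, hPmem⟩ := ih
      have hstep := finrank_add_finrank_le_finrank_inf_comap_add_finrank_sup_map g P
      have hle : (P ⊓ P.comap g) ⊔ (P ⊓ P.comap g).map g ≤ P :=
        sup_le inf_le_left (map_le_iff_le_comap.mpr inf_le_right)
      refine ⟨P ⊓ P.comap g, by omega, (finrank_mono hle).trans (by omega), ?_⟩
      rintro x ⟨hxP, hgxP⟩ (_ | j) hj
      · exact hPmem x hxP 0 (Nat.zero_le _)
      · rw [pow_succ, Module.End.mul_apply]
        exact hPmem (g x) hgxP j (by omega)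
  rcases (finrank K N).eq_zero_or_pos with h0 | hpos
  · obtain ⟨x, hx⟩ := exists_ne (0 : V)
    exact ⟨x, hx, by simp [h0]⟩
  · obtain ⟨P, hPdim, -, hPmem⟩ := chain (finrank K N - 1)
    have hP : P ≠ ⊥ := fun h => by rw [h, finrank_bot] at hPdim; omega
    obtain ⟨x, hxP, hx0⟩ := exists_mem_ne_zero_of_ne_bot hP
    exact ⟨x, hx0, fun j hj => hPmem x hxP j (by omega)⟩

theorem finrank_sup_map_le_of_isotropic {B : LinearMap.BilinForm K V} (hB : B.Nondegenerate)
    (g : V →ₗ[K] V) {M : Submodule K V} (hM : ∀ u ∈ M, ∀ v ∈ M, B u v = 0)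
    (hgM : ∀ u ∈ M, ∀ v ∈ M, B u (g v) = 0) (hdim : finrank K V = 2 * finrank K M + 1) :
    finrank K ↥(M ⊔ M.map g) ≤ finrank K M + 1 := by
  have hle : M ⊔ M.map g ≤ B.orthogonal M :=
    sup_le (fun v hv u hu => hM u hu v hv) (map_le_iff_le_comap.mpr fun v hv u hu => hgM u hu v hv)
  have := finrank_mono hle
  rw [LinearMap.BilinForm.finrank_orthogonal hB] at this
  omega

end Finrank

theorem apply_pow_mul_mul_sq_eq_zero {A R : Type*} [CommRing A] [Zero R] (c : A → R)
    {α θ ℓ : A} {m : ℕ} {M : Set A} (hM : ∀ u ∈ M, ∀ v ∈ M, c (α * u * v) = 0)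
    (hθM : ∀ u ∈ M, ∀ v ∈ M, c (α * θ * u * v) = 0) (hℓ : ∀ j < m, θ ^ j * ℓ ∈ M) :
    ∀ d < 2 * m, c (θ ^ d * (α * ℓ ^ 2)) = 0 := by
  intro d hd
  by_cases hlow : d ≤ 2 * m - 2
  · obtain ⟨i, j, hi, hj, rfl⟩ : ∃ i j, i < m ∧ j < m ∧ d = i + j :=
      ⟨min d (m - 1), d - min d (m - 1), by omega, by omega, by omega⟩
    convert hM _ (hℓ i hi) _ (hℓ j hj) using 2
    ring
  · rw [show d = 1 + (m - 1) + (m - 1) by omega]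
    convert hθM _ (hℓ (m - 1) (by omega)) _ (hℓ (m - 1) (by omega)) using 2
    ring

theorem AdjoinRoot.isReduced_of_squarefree {K : Type*} [Field K] {f : Polynomial K}
    (hf : Squarefree f) : IsReduced (AdjoinRoot f) := by
  refine ⟨fun x ⟨n, hn⟩ => ?_⟩
  obtain ⟨p, rfl⟩ := AdjoinRoot.mk_surjective x
  rw [← map_pow, AdjoinRoot.mk_eq_zero] at hn
  exact AdjoinRoot.mk_eq_zero.mpr ((hf.dvd_pow_iff_dvd n.succ_ne_zero).mp
    (hn.trans (pow_dvd_pow p n.le_succ)))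

theorem PowerBasis.exists_eq_algebraMap_of_forall_apply_gen_pow_mul_eq_zero {k A : Type*}
    [Field k] [CommRing A] [Algebra k A] [Nontrivial A] (pb : PowerBasis k A) (c : A →ₗ[k] k)
    (hc : ∀ x, (∀ y, c (x * y) = 0) → x = 0) (hc0 : ∀ i < pb.dim - 1, c (pb.gen ^ i) = 0)
    {β : A} (hβ : ∀ d < pb.dim - 1, c (pb.gen ^ d * β) = 0) : ∃ a : k, β = algebraMap k A a := by
  let B : LinearMap.BilinForm k A := (LinearMap.mul k A).compr₂ c
  have hB : B.Nondegenerate :=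
    (IsRefl.nondegenerate_iff_separatingLeft fun x y h => by
      simpa [B, mul_comm] using h).mpr hc
  let S := span k (Set.range fun i : Fin (pb.dim - 1) => pb.gen ^ (i : ℕ))
  have : Module.Finite k A := pb.finite
  have hS : Module.finrank k S = pb.dim - 1 := by
    have hli := pb.basis.linearIndependent.comp _ (Fin.castLE_injective (Nat.sub_le pb.dim 1))
    rw [finrank_span_eq_card (by simpa [Function.comp_def] using hli), Fintype.card_fin]
  have horth : ∀ x, (∀ d < pb.dim - 1, c (pb.gen ^ d * x) = 0) → x ∈ B.orthogonal S :=
    fun x hx n hn => (span_le (p := ker (B.flip x)).mpr (by rintro _ ⟨i, rfl⟩; exact hx i i.2) hn)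
  have hline : span k {1} = B.orthogonal S := by
    refine eq_of_le_of_finrank_le ?_ ?_
    · rw [span_le, Set.singleton_subset_iff]
      exact horth 1 fun d hd => by simpa using hc0 d hd
    · rw [LinearMap.BilinForm.finrank_orthogonal hB, hS, finrank_span_singleton one_ne_zero,
        pb.finrank]
      omega
  obtain ⟨a, ha⟩ := mem_span_singleton.mp (hline ▸ horth β hβ)
  exact ⟨a, by rw [← ha, Algebra.algebraMap_eq_smul_one]⟩

theorem stmt_13_general (k : Type*) [Field k]
    (f : Polynomial k) (hsep : f.Separable)
    (m : ℕ) (hdeg : f.natDegree = 2 * m + 1)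
    (coeffTop : AdjoinRoot f →ₗ[k] k)
    (hct0 : ∀ i : ℕ, i < f.natDegree - 1 → coeffTop (AdjoinRoot.root f ^ i) = 0)
    (α : AdjoinRoot f)
    (hnd : ∀ x : AdjoinRoot f, (∀ y : AdjoinRoot f, coeffTop (α * x * y) = 0) → x = 0)
    (M : Submodule k (AdjoinRoot f)) (hMdim : Module.finrank k M = m)
    (hiso : ∀ u ∈ M, ∀ v ∈ M, coeffTop (α * u * v) = 0)
    (hiso' : ∀ u ∈ M, ∀ v ∈ M, coeffTop (α * AdjoinRoot.root f * u * v) = 0) :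
    ∃ a : k, a ≠ 0 ∧ ∃ ℓ : AdjoinRoot f, IsUnit ℓ ∧
      α * ℓ ^ 2 = algebraMap k (AdjoinRoot f) a := by
  set θ := AdjoinRoot.root f
  have hf0 : f ≠ 0 := Polynomial.ne_zero_of_natDegree_gt (n := 0) (by omega)
  let pb := AdjoinRoot.powerBasis hf0
  have hdim : pb.dim = 2 * m + 1 := by rw [AdjoinRoot.powerBasis_dim, hdeg]
  have : Module.Finite k (AdjoinRoot f) := pb.finite
  have := AdjoinRoot.nontrivial f (by rw [Polynomial.degree_eq_natDegree hf0, hdeg]; norm_cast)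
  have := AdjoinRoot.isReduced_of_squarefree hsep.squarefree
  let w : LinearMap.BilinForm k (AdjoinRoot f) :=
    LinearMap.BilinForm.compLeft ((LinearMap.mul k _).compr₂ coeffTop) (mulLeft k α)
  have hw : w.Nondegenerate :=
    (IsRefl.nondegenerate_iff_separatingLeft fun x y h => by
      simpa [w, mul_right_comm] using h).mpr hnd
  have hMθ := finrank_sup_map_le_of_isotropic hw (mulLeft k θ) hiso
    (fun u hu v hv => by simpa [w, mul_left_comm, mul_assoc] using hiso' u hu v hv)
    (by rw [pb.finrank, hdim, hMdim])
  obtain ⟨ℓ, hℓ0, hℓM⟩ := exists_ne_zero_forall_pow_apply_mem _ _ hMθ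
  simp only [hMdim, pow_mulLeft, mulLeft_apply] at hℓM
  obtain ⟨a, ha⟩ := pb.exists_eq_algebraMap_of_forall_apply_gen_pow_mul_eq_zero coeffTop
    (fun x hx => hnd x fun y => by simpa [mul_assoc, mul_left_comm] using hx (α * y)) hct0
    (fun d hd => apply_pow_mul_mul_sq_eq_zero coeffTop hiso hiso' hℓM d (by omega))
  have ha0 : a ≠ 0 := by
    rintro rfl
    refine hℓ0 (eq_zero_of_pow_eq_zero (n := 2) (hnd _ fun y => ?_))
    rw [ha, map_zero, zero_mul, map_zero]
  refine ⟨a, ha0, ℓ, ?_, ha⟩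
  exact (isUnit_pow_iff two_ne_zero).mp
    (isUnit_of_mul_isUnit_right (ha ▸ (Ne.isUnit ha0).map (algebraMap k _)))

/-- Let `char k ≠ 2`, `L = k[t]/(f)` with `f` monic separable of degree
`n = 2m + 1`, `m ≥ 1`, `θ` the image of `t`, and `α ∈ L` such that the symmetric form
`w(x, y) = θ*_{n-1}(α x y)` is nondegenerate. If there is an `m`-dimensional subspace `M ⊆ L`
isotropic for both `w` and `θ·w`, then `α ℓ² = a` for some nonzero `a ∈ k` and unit `ℓ ∈ L^×`;
in particular `α ∈ k^× (L^×)²`. -/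
theorem stmt_13 (k : Type*) [Field k] (hchar : ringChar k ≠ 2)
    (f : Polynomial k) (hf : f.Monic) (hsep : f.Separable)
    (m : ℕ) (hm : 1 ≤ m) (hdeg : f.natDegree = 2 * m + 1)
    (coeffTop : AdjoinRoot f →ₗ[k] k)
    (hct1 : coeffTop (AdjoinRoot.root f ^ (f.natDegree - 1)) = 1)
    (hct0 : ∀ i : ℕ, i < f.natDegree - 1 → coeffTop (AdjoinRoot.root f ^ i) = 0)
    (α : AdjoinRoot f)
    (hnd : ∀ x : AdjoinRoot f, (∀ y : AdjoinRoot f, coeffTop (α * x * y) = 0) → x = 0)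
    (M : Submodule k (AdjoinRoot f)) (hMdim : Module.finrank k M = m)
    (hiso : ∀ u ∈ M, ∀ v ∈ M, coeffTop (α * u * v) = 0)
    (hiso' : ∀ u ∈ M, ∀ v ∈ M, coeffTop (α * AdjoinRoot.root f * u * v) = 0) :
    ∃ a : k, a ≠ 0 ∧ ∃ ℓ : AdjoinRoot f, IsUnit ℓ ∧
      α * ℓ ^ 2 = algebraMap k (AdjoinRoot f) a :=
  stmt_13_general k f hsep m hdeg coeffTop hct0 α hnd M hMdim hiso hiso'
end

section
/- Let k have characteristic different from 2, let n = 2m + 1 with m ≥ 1, let α ∈ L be such that the symmetric bilinear form w(x, y) := θ*_{n−1}(α·x·y) on L is nondegenerate, and let M ⊆ L be an m-dimensional k-subspace with θ*_{n−1}(α·u·v) = 0 and θ*_{n−1}(α·θ·u·v) = 0 for all u, v ∈ M. Then multiplication by θ is injective on M: if u ∈ M and θ·u = 0 then u = 0. -/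
/-- In the setting of Statement 13 (`w(x,y) = θ*_{n-1}(α x y)` nondegenerate,
`M` an `m`-dimensional subspace isotropic for `w` and `θ·w`), multiplication by `θ` is
injective on `M`: if `u ∈ M` and `θ u = 0` then `u = 0`. -/
theorem stmt_15 (k : Type*) [Field k] (hchar : ringChar k ≠ 2)
    (f : Polynomial k) (hf : f.Monic) (hsep : f.Separable)
    (m : ℕ) (hm : 1 ≤ m) (hdeg : f.natDegree = 2 * m + 1)
    (coeffTop : AdjoinRoot f →ₗ[k] k)
    (hct1 : coeffTop (AdjoinRoot.root f ^ (f.natDegree - 1)) = 1)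
    (hct0 : ∀ i : ℕ, i < f.natDegree - 1 → coeffTop (AdjoinRoot.root f ^ i) = 0)
    (α : AdjoinRoot f)
    (hnd : ∀ x : AdjoinRoot f, (∀ y : AdjoinRoot f, coeffTop (α * x * y) = 0) → x = 0)
    (M : Submodule k (AdjoinRoot f)) (hMdim : Module.finrank k M = m)
    (hiso : ∀ u ∈ M, ∀ v ∈ M, coeffTop (α * u * v) = 0)
    (hiso' : ∀ u ∈ M, ∀ v ∈ M, coeffTop (α * AdjoinRoot.root f * u * v) = 0) :
    ∀ u ∈ M, AdjoinRoot.root f * u = 0 → u = 0 := by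
  intro u hu hθu
  -- `AdjoinRoot f` is reduced since `f` is squarefree
  haveI hred : IsReduced (AdjoinRoot f) :=
    (Ideal.isRadical_iff_quotient_reduced (Ideal.span {f})).mp
      (isRadical_iff_span_singleton.mp
        (isRadical_iff_squarefree_or_zero.mpr (Or.inl hsep.squarefree)))
  -- key: since θ·u = 0, any product u*y is a scalar multiple of u
  have key : ∀ y : AdjoinRoot f, ∃ a : k, u * y = a • u := by
    intro y
    obtain ⟨p, rfl⟩ := AdjoinRoot.mk_surjective y
    refine ⟨p.coeff 0, ?_⟩
    have hp : Polynomial.X * p.divX + Polynomial.C (p.coeff 0) = p := Polynomial.X_mul_divX_add p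
    calc u * AdjoinRoot.mk f p
        = u * AdjoinRoot.mk f (Polynomial.X * p.divX + Polynomial.C (p.coeff 0)) := by rw [hp]
      _ = AdjoinRoot.root f * u * AdjoinRoot.mk f p.divX
            + (p.coeff 0) • u := by
          rw [map_add, mul_add]
          congr 1
          · simp only [map_mul, AdjoinRoot.mk_X]
            ring
          · rw [AdjoinRoot.mk_C, ← AdjoinRoot.algebraMap_eq, Algebra.smul_def]
            ring
      _ = (p.coeff 0) • u := by rw [hθu, zero_mul, zero_add]
  obtain ⟨a, ha⟩ := key α
  rw [mul_comm u α] at ha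
  obtain ⟨b, hb⟩ := key u
  by_cases hb0 : b = 0
  · -- u * u = 0, so u = 0 by reducedness
    have : u * u = 0 := by rw [hb, hb0, zero_smul]
    exact IsReduced.eq_zero u ⟨2, by rw [pow_two, this]⟩
  · have h1 : coeffTop (α * u * u) = 0 := hiso u hu u hu
    have h2 : a * b * coeffTop u = 0 := by
      rw [← h1, show α * u * u = (a * b) • u by
        rw [ha, smul_mul_assoc, hb, smul_smul], map_smul, smul_eq_mul]
    have h3 : a * coeffTop u = 0 := by
      rcases mul_eq_zero.1 h2 with h | h
      · rcases mul_eq_zero.1 h with h' | h'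
        · rw [h', zero_mul]
        · exact absurd h' hb0
      · rw [h, mul_zero]
    refine hnd u fun y => ?_
    obtain ⟨c, hc⟩ := key y
    rw [show α * u * y = (a * c) • u by
      rw [ha, smul_mul_assoc, hc, smul_smul], map_smul, smul_eq_mul, mul_comm a c, mul_assoc,
      h3, mul_zero]
end

section
/- Let α ∈ L be a unit, and consider the k-linear maps w, w' : L → L* = Hom_k(L, k) defined by w(x) := (y ↦ θ*_{n−1}(α·x·y)) and w'(x) := (y ↦ θ*_{n−1}(α·θ·x·y)). Then w is bijective and the composite w^{−1}∘w' : L → L equals multiplication by θ. -/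
/-!
Write `L = k[t]/(f)` in its power basis `1, θ, …, θ^{n-1}`. If `z ≠ 0` has leading coordinate
`c_j` (largest `j` with `c_j ≠ 0`), then `θ*_{n-1}(z θ^{n-1-j}) = c_j ≠ 0`, so the trace-like
pairing `(x, y) ↦ θ*_{n-1}(x y)` is nondegenerate. Twisting it by the unit `α` keeps it
nondegenerate, hence `w` is injective and, by dimension count, bijective; and `w' = w ∘ (θ ·)`.
-/

namespace PowerBasis

variable {R S : Type*} [CommRing R] [Ring S] [Algebra R S]

theorem map_mul_gen_pow_eq_leading_coeff (pb : PowerBasis R S) (φ : S →ₗ[R] R)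
    (h_top : φ (pb.gen ^ (pb.dim - 1)) = 1)
    (h_low : ∀ i < pb.dim - 1, φ (pb.gen ^ i) = 0)
    (z : S) (j : Fin pb.dim) (hj : ∀ i, pb.basis.repr z i ≠ 0 → i ≤ j) :
    φ (z * pb.gen ^ (pb.dim - 1 - j)) = pb.basis.repr z j := by
  conv_lhs => rw [← pb.basis.sum_repr z]
  rw [Finset.sum_mul, map_sum, Finset.sum_eq_single j]
  · rw [pb.basis_eq_pow, smul_mul_assoc, map_smul, ← pow_add,
      Nat.add_sub_cancel' (by omega), h_top, smul_eq_mul, mul_one]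
  · intro i _ hij
    by_cases hci : pb.basis.repr z i = 0
    · rw [hci, zero_smul, zero_mul, map_zero]
    · have hlt : (i : ℕ) < j := lt_of_le_of_ne (hj i hci) (Fin.val_ne_of_ne hij)
      rw [pb.basis_eq_pow, smul_mul_assoc, map_smul, ← pow_add, h_low _ (by omega),
        smul_zero]
  · exact fun h => absurd (Finset.mem_univ j) h

theorem eq_zero_of_forall_map_mul_eq_zero (pb : PowerBasis R S) (φ : S →ₗ[R] R)
    (h_top : φ (pb.gen ^ (pb.dim - 1)) = 1)
    (h_low : ∀ i < pb.dim - 1, φ (pb.gen ^ i) = 0)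
    {z : S} (hz : ∀ y, φ (z * y) = 0) : z = 0 := by
  by_contra hz0
  have hsupp : (pb.basis.repr z).support.Nonempty := by
    rwa [Finsupp.support_nonempty_iff, ne_eq, LinearEquiv.map_eq_zero_iff]
  set j := (pb.basis.repr z).support.max' hsupp
  have hcj : pb.basis.repr z j ≠ 0 :=
    Finsupp.mem_support_iff.mp ((pb.basis.repr z).support.max'_mem hsupp)
  have hleading : ∀ i, pb.basis.repr z i ≠ 0 → i ≤ j := fun i hi =>
    (pb.basis.repr z).support.le_max' i (Finsupp.mem_support_iff.mpr hi)
  exact hcj <| (pb.map_mul_gen_pow_eq_leading_coeff φ h_top h_low z j hleading).symm.trans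
    (hz _)

theorem injective_of_apply_eq_map_mul (pb : PowerBasis R S) (φ : S →ₗ[R] R)
    (h_top : φ (pb.gen ^ (pb.dim - 1)) = 1)
    (h_low : ∀ i < pb.dim - 1, φ (pb.gen ^ i) = 0)
    {α : S} (hα : IsUnit α) (w : S →ₗ[R] Module.Dual R S)
    (hw : ∀ x y, w x y = φ (α * x * y)) : Function.Injective w := by
  rw [injective_iff_map_eq_zero]
  intro x hx
  have hαx : α * x = 0 :=
    pb.eq_zero_of_forall_map_mul_eq_zero φ h_top h_low fun y => by rw [← hw, hx]; rfl
  exact (hα.mul_right_eq_zero).mp hαx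

end PowerBasis

theorem stmt_16_general (k : Type*) [Field k] (f : Polynomial k) (hf : f.Monic)
    (coeffTop : AdjoinRoot f →ₗ[k] k)
    (hct1 : coeffTop (AdjoinRoot.root f ^ (f.natDegree - 1)) = 1)
    (hct0 : ∀ i : ℕ, i < f.natDegree - 1 → coeffTop (AdjoinRoot.root f ^ i) = 0)
    (α : AdjoinRoot f) (hα : IsUnit α)
    (w w' : AdjoinRoot f →ₗ[k] Module.Dual k (AdjoinRoot f))
    (hw : ∀ x y : AdjoinRoot f, w x y = coeffTop (α * x * y))
    (hw' : ∀ x y : AdjoinRoot f, w' x y = coeffTop (α * AdjoinRoot.root f * x * y)) :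
    Function.Bijective w ∧
      ∀ x : AdjoinRoot f, Function.invFun w (w' x) = AdjoinRoot.root f * x := by
  let pb := AdjoinRoot.powerBasis' hf
  have := pb.finite
  have hinj : Function.Injective w :=
    pb.injective_of_apply_eq_map_mul coeffTop hct1 hct0 hα w hw
  have hsurj : Function.Surjective w :=
    (LinearMap.injective_iff_surjective_of_finrank_eq_finrank
      Subspace.dual_finrank_eq.symm).mp hinj
  refine ⟨⟨hinj, hsurj⟩, fun x => ?_⟩
  have hw'_eq : w' x = w (AdjoinRoot.root f * x) :=
    LinearMap.ext fun y => by rw [hw, hw', mul_assoc α]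
  rw [hw'_eq, Function.leftInverse_invFun hinj]

/-- Let `L = k[t]/(f)` with `f` monic separable of degree `n ≥ 1`, `θ` the
image of `t`, and `α ∈ L` a unit. Let `w, w' : L → L*` be the `k`-linear maps given by
`w x = θ*_{n-1}(α x ·)` and `w' x = θ*_{n-1}(α θ x ·)`. Then `w` is bijective and
`w⁻¹ ∘ w'` is multiplication by `θ`. -/
theorem stmt_16 (k : Type*) [Field k] (f : Polynomial k) (hf : f.Monic)
    (hsep : f.Separable) (hn : 1 ≤ f.natDegree)
    (coeffTop : AdjoinRoot f →ₗ[k] k)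
    (hct1 : coeffTop (AdjoinRoot.root f ^ (f.natDegree - 1)) = 1)
    (hct0 : ∀ i : ℕ, i < f.natDegree - 1 → coeffTop (AdjoinRoot.root f ^ i) = 0)
    (α : AdjoinRoot f) (hα : IsUnit α)
    (w w' : AdjoinRoot f →ₗ[k] Module.Dual k (AdjoinRoot f))
    (hw : ∀ x y : AdjoinRoot f, w x y = coeffTop (α * x * y))
    (hw' : ∀ x y : AdjoinRoot f, w' x y = coeffTop (α * AdjoinRoot.root f * x * y)) :
    Function.Bijective w ∧
      ∀ x : AdjoinRoot f, Function.invFun w (w' x) = AdjoinRoot.root f * x :=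
  stmt_16_general k f hf coeffTop hct1 hct0 α hα w w' hw hw'
end

section
/- For α ∈ L, the symmetric k-bilinear form on L given by (x, y) ↦ θ*_{n−1}(α·x·y) is nondegenerate if and only if α is a unit of L. -/
/-!
Writing `z ≠ 0` in `L = k[t]/(f)` as `q(θ)` with `q ≠ 0` of degree `d < n`, the product
`z θ^{n-1-d}` is `(q t^{n-1-d})(θ)`, of degree `n - 1`, whose `θ^{n-1}`-coefficient is the
leading coefficient of `q`. So the form `(z, y) ↦ θ*_{n-1}(z y)` is nondegenerate, and
`(x, y) ↦ θ*_{n-1}(α x y)` is nondegenerate exactly when `α` is a non-zero-divisor of `L`. As `L`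
is finite-dimensional, hence Artinian, these are its units.
-/

open Polynomial

section TopCoefficient

variable {k A : Type*} [Field k] [CommRing A] [Algebra k A]
  {ℓ : A →ₗ[k] k} {x : A} {m : ℕ}

theorem apply_aeval_eq_coeff (hℓ1 : ℓ (x ^ m) = 1) (hℓ0 : ∀ i < m, ℓ (x ^ i) = 0)
    {p : k[X]} (hp : p.natDegree ≤ m) : ℓ (aeval x p) = p.coeff m := by
  rw [aeval_eq_sum_range' (Nat.lt_succ_of_le hp), map_sum, Finset.sum_eq_single m]
  · rw [map_smul, hℓ1, smul_eq_mul, mul_one]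
  · intro i hi hne
    have hlt : i < m := lt_of_le_of_ne (Nat.lt_succ_iff.mp (Finset.mem_range.mp hi)) hne
    rw [map_smul, hℓ0 i hlt, smul_zero]
  · exact fun h => absurd (Finset.self_mem_range_succ m) h

theorem exists_apply_aeval_mul_ne_zero (hℓ1 : ℓ (x ^ m) = 1) (hℓ0 : ∀ i < m, ℓ (x ^ i) = 0)
    {q : k[X]} (hq : q ≠ 0) (hdeg : q.natDegree ≤ m) : ∃ y : A, ℓ (aeval x q * y) ≠ 0 := by
  refine ⟨x ^ (m - q.natDegree), ?_⟩
  have hshift : (q * X ^ (m - q.natDegree)).natDegree = m := by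
    rw [natDegree_mul_X_pow _ hq]
    omega
  have htop : (q * X ^ (m - q.natDegree)).coeff m = q.leadingCoeff := by
    simpa only [Nat.add_sub_cancel' hdeg, leadingCoeff] using
      coeff_mul_X_pow q (m - q.natDegree) q.natDegree
  rw [← aeval_X_pow (R := k) (x := x), ← map_mul, apply_aeval_eq_coeff hℓ1 hℓ0 hshift.le, htop]
  exact leadingCoeff_ne_zero.mpr hq

end TopCoefficient

namespace AdjoinRoot

variable {k : Type*} [Field k] {f : k[X]}

theorem eq_zero_of_forall_apply_mul_eq_zero (hf : f.Monic) {ℓ : AdjoinRoot f →ₗ[k] k}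
    (hℓ1 : ℓ (root f ^ (f.natDegree - 1)) = 1)
    (hℓ0 : ∀ i < f.natDegree - 1, ℓ (root f ^ i) = 0)
    {z : AdjoinRoot f} (hz : ∀ y, ℓ (z * y) = 0) : z = 0 := by
  by_contra hz0
  obtain ⟨p, rfl⟩ := mk_surjective z
  have hzq : aeval (root f) (p %ₘ f) = mk f p := by
    rw [aeval_eq, ← modByMonicHom_mk hf, mk_leftInverse hf]
  have hq : p %ₘ f ≠ 0 := fun h => hz0 (by rw [← hzq, h, map_zero])
  have hdeg : (p %ₘ f).natDegree < f.natDegree :=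
    natDegree_lt_natDegree hq (degree_modByMonic_lt _ hf)
  obtain ⟨y, hy⟩ := exists_apply_aeval_mul_ne_zero hℓ1 hℓ0 hq (by omega)
  exact hy (hzq ▸ hz y)

theorem isArtinianRing (hf : f.Monic) : IsArtinianRing (AdjoinRoot f) :=
  have := (powerBasis' hf).finite
  IsArtinianRing.of_finite k (AdjoinRoot f)

end AdjoinRoot

theorem stmt_17_general (k : Type*) [Field k] (f : Polynomial k) (hf : f.Monic)
    (coeffTop : AdjoinRoot f →ₗ[k] k)
    (hct1 : coeffTop (AdjoinRoot.root f ^ (f.natDegree - 1)) = 1)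
    (hct0 : ∀ i : ℕ, i < f.natDegree - 1 → coeffTop (AdjoinRoot.root f ^ i) = 0)
    (α : AdjoinRoot f) :
    (∀ x : AdjoinRoot f, (∀ y : AdjoinRoot f, coeffTop (α * x * y) = 0) → x = 0) ↔
      IsUnit α := by
  have := AdjoinRoot.isArtinianRing hf
  rw [IsArtinianRing.isUnit_iff_mem_nonZeroDivisors, mem_nonZeroDivisors_iff_left]
  constructor
  · intro h x hx
    exact h x fun y => by rw [hx, zero_mul, map_zero]
  · intro h x hx
    exact h x (AdjoinRoot.eq_zero_of_forall_apply_mul_eq_zero hf hct1 hct0 hx)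

/-- Let `L = k[t]/(f)` with `f` monic separable of degree `n ≥ 1` and `θ` the
image of `t`. For `α ∈ L`, the symmetric bilinear form `(x, y) ↦ θ*_{n-1}(α x y)` on `L` is
nondegenerate if and only if `α` is a unit of `L`. -/
theorem stmt_17 (k : Type*) [Field k] (f : Polynomial k) (hf : f.Monic)
    (hsep : f.Separable) (hn : 1 ≤ f.natDegree)
    (coeffTop : AdjoinRoot f →ₗ[k] k)
    (hct1 : coeffTop (AdjoinRoot.root f ^ (f.natDegree - 1)) = 1)
    (hct0 : ∀ i : ℕ, i < f.natDegree - 1 → coeffTop (AdjoinRoot.root f ^ i) = 0)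
    (α : AdjoinRoot f) :
    (∀ x : AdjoinRoot f, (∀ y : AdjoinRoot f, coeffTop (α * x * y) = 0) → x = 0) ↔
      IsUnit α :=
  stmt_17_general k f hf coeffTop hct1 hct0 α
end
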